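/- arXiv:0804.0396 — 12 statements merged into one kernel-verified Lean document; each statement's English description precedes it below -/
import Mathlib

section
/- The 3-CNF formula C is satisfiable if and only if there exists a selection σ : Fin m → Fin 3 such that for all clause indices i, i' : Fin m, the occurrences (i, σ i) and (i', σ i') are not contradictory. -/
/-! A satisfying assignment makes one literal true in every clause, and true literals never
clash. Conversely, a clash-free family of literals is made true at once by the assignment that
gives each variable the sign of any selected literal on it. -/

section Literals

variable {ι V : Type*}

def IsConsistent (L : ι → V × Bool) : Prop :=
  ∀ i i', (L i).1 = (L i').1 → (L i).2 = (L i').2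

theorem exists_forall_eq_iff_isConsistent (L : ι → V × Bool) :
    (∃ a : V → Bool, ∀ i, a (L i).1 = (L i).2) ↔ IsConsistent L := by
  classical
  constructor
  · rintro ⟨a, ha⟩ i i' hvar
    rw [← ha i, ← ha i', hvar]
  · intro hL
    refine ⟨fun v => if h : ∃ i, (L i).1 = v then (L h.choose).2 else false, fun i => ?_⟩
    have h : ∃ k, (L k).1 = (L i).1 := ⟨i, rfl⟩
    simp only [dif_pos h]
    exact hL _ _ h.choose_spec

theorem isConsistent_comp_iff_not_contradictory {κ : Type*} (C : ι → κ → V × Bool) (σ : ι → κ) :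
    IsConsistent (fun i => C i (σ i)) ↔ ∀ i i' : ι,
      ¬((i, σ i) ≠ (i', σ i') ∧ (C i (σ i)).1 = (C i' (σ i')).1 ∧
        (C i (σ i)).2 ≠ (C i' (σ i')).2) := by
  refine forall₂_congr fun i i' => ⟨fun h ⟨_, hvar, hsign⟩ => hsign (h hvar), fun h hvar => ?_⟩
  by_contra hsign
  exact h ⟨fun heq => hsign (by cases heq; rfl), hvar, hsign⟩

end Literals

/-- The 3-CNF formula `C` is satisfiable iff there exists a selection
`σ : Fin m → Fin 3` such that no two occurrences `(i, σ i)`, `(i', σ i')` are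
contradictory. -/
theorem threeSat_iff_selection (n m : ℕ) (C : Fin m → Fin 3 → Fin n × Bool) :
    (∃ a : Fin n → Bool, ∀ i : Fin m, ∃ j : Fin 3, a (C i j).1 = (C i j).2) ↔
    (∃ σ : Fin m → Fin 3, ∀ i i' : Fin m,
      ¬(((i, σ i) : Fin m × Fin 3) ≠ (i', σ i') ∧
        (C i (σ i)).1 = (C i' (σ i')).1 ∧
        (C i (σ i)).2 ≠ (C i' (σ i')).2)) := by
  calc (∃ a : Fin n → Bool, ∀ i, ∃ j, a (C i j).1 = (C i j).2)
      ↔ ∃ σ : Fin m → Fin 3, ∃ a : Fin n → Bool, ∀ i, a (C i (σ i)).1 = (C i (σ i)).2 := by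
        simp only [Classical.skolem]
        exact exists_comm
    _ ↔ _ := exists_congr fun σ =>
        (exists_forall_eq_iff_isConsistent _).trans (isConsistent_comp_iff_not_contradictory C σ)
end

section
/- The 3-CNF formula C is satisfiable if and only if there exists a finite set X of occurrences such that (a) for every clause index i : Fin m there is some j : Fin 3 with (i, j) ∈ X, and (b) no two occurrences belonging to X are contradictory. -/
/-! A set of literals is consistent exactly when some assignment makes all of them true: set each
variable to `true` iff it occurs positively in the set. The occurrences made true by a satisfying
assignment form such a set covering every clause, and conversely. -/

section Literals

variable {O V : Type*} (lit : O → V × Bool)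

theorem forall_not_contradictory_iff (X : Set O) :
    (∀ o ∈ X, ∀ o' ∈ X, ¬(o ≠ o' ∧ (lit o).1 = (lit o').1 ∧ (lit o).2 ≠ (lit o').2)) ↔
      ∀ o ∈ X, ∀ o' ∈ X, (lit o).1 = (lit o').1 → (lit o).2 = (lit o').2 := by
  refine forall₂_congr fun o _ => forall₂_congr fun o' _ => ?_
  by_cases h : o = o' <;> simp [h]

theorem exists_assignment_iff_consistent (X : Set O) :
    (∃ a : V → Bool, ∀ o ∈ X, a (lit o).1 = (lit o).2) ↔
      ∀ o ∈ X, ∀ o' ∈ X, (lit o).1 = (lit o').1 → (lit o).2 = (lit o').2 := by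
  classical
  constructor
  · rintro ⟨a, ha⟩ o ho o' ho' hv
    rw [← ha o ho, ← ha o' ho', hv]
  · intro hX
    refine ⟨fun v => decide (∃ o' ∈ X, lit o' = (v, true)), fun o ho => ?_⟩
    cases hb : (lit o).2
    · simp only [decide_eq_false_iff_not, not_exists, not_and]
      intro o' ho' hlit
      have := hX o ho o' ho' (by rw [hlit])
      rw [hb, hlit] at this
      exact Bool.false_ne_true this
    · exact decide_eq_true ⟨o, ho, Prod.ext rfl hb⟩

end Literals

/-- The 3-CNF formula `C` is satisfiable iff there is a finite set `X` of
occurrences covering every clause and containing no contradictory pair. -/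
theorem threeSat_iff_occurrenceSet (n m : ℕ) (C : Fin m → Fin 3 → Fin n × Bool) :
    (∃ a : Fin n → Bool, ∀ i : Fin m, ∃ j : Fin 3, a (C i j).1 = (C i j).2) ↔
    (∃ X : Finset (Fin m × Fin 3),
      (∀ i : Fin m, ∃ j : Fin 3, (i, j) ∈ X) ∧
      (∀ o ∈ X, ∀ o' ∈ X,
        ¬(o ≠ o' ∧ (C o.1 o.2).1 = (C o'.1 o'.2).1 ∧
          (C o.1 o.2).2 ≠ (C o'.1 o'.2).2))) := by
  let lit : Fin m × Fin 3 → Fin n × Bool := fun o => C o.1 o.2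
  constructor
  · rintro ⟨a, ha⟩
    let X := Finset.univ.filter fun o => a (lit o).1 = (lit o).2
    refine ⟨X, fun i => ?_, ?_⟩
    · obtain ⟨j, hj⟩ := ha i
      exact ⟨j, Finset.mem_filter.2 ⟨Finset.mem_univ _, hj⟩⟩
    · refine (forall_not_contradictory_iff lit X).2 ?_
      exact (exists_assignment_iff_consistent lit X).1 ⟨a, fun o ho => (Finset.mem_filter.1 ho).2⟩
  · rintro ⟨X, hcover, hconsistent⟩
    obtain ⟨a, ha⟩ := (exists_assignment_iff_consistent lit X).2
      ((forall_not_contradictory_iff lit X).1 hconsistent)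
    refine ⟨a, fun i => ?_⟩
    obtain ⟨j, hj⟩ := hcover i
    exact ⟨j, ha (i, j) hj⟩
end

section
/- Let an outer pair-instance (E, Φ, Γ, e₁, e₂) and an inner instance (E', Φ', Γ') be given, and let a : ℕ. If there exists X ∈ Φ such that for every S ∈ Γ it is not the case that both e₁ S ∈ X and e₂ S ∈ X, and there exists X' ∈ Φ' whose cost under every scenario of Γ' is at most a, then there exist X ∈ Φ and f : E → Φ' such that the cost of the product solution sol(X, f) under every scenario of the product instance is at most a. -/
/-- An instance: a finite type of edges, a nonempty finite family of feasible solutions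
(finsets of edges), and scenarios indexed by a finite type, each scenario being a cost
function from edges to ℕ. -/
structure Inst where
  E : Type
  [fintE : Fintype E]
  [decE : DecidableEq E]
  sols : Finset (Finset E)
  sols_nonempty : sols.Nonempty
  Scen : Type
  [fintScen : Fintype Scen]
  cost : Scen → E → ℕ

attribute [instance] Inst.fintE Inst.decE Inst.fintScen

/-- The cost of a solution `X` under scenario `S`. -/
def Inst.solCost (I : Inst) (X : Finset I.E) (S : I.Scen) : ℕ :=
  ∑ e ∈ X, I.cost S e

/-- A pair-instance: scenarios are indexed by a finite type `Scen` equipped with maps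
`e₁ e₂ : Scen → E` with `e₁ S ≠ e₂ S`; the scenario of `S` gives cost 1 to `e₁ S` and
`e₂ S` and cost 0 to every other edge. -/
structure PairInst where
  E : Type
  [fintE : Fintype E]
  [decE : DecidableEq E]
  sols : Finset (Finset E)
  sols_nonempty : sols.Nonempty
  Scen : Type
  [fintScen : Fintype Scen]
  e₁ : Scen → E
  e₂ : Scen → E
  ne : ∀ S, e₁ S ≠ e₂ S

attribute [instance] PairInst.fintE PairInst.decE PairInst.fintScen

/-- A pair-instance viewed as an instance, with the described 0/1 scenario costs. -/
def PairInst.toInst (B : PairInst) : Inst where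
  E := B.E
  sols := B.sols
  sols_nonempty := B.sols_nonempty
  Scen := B.Scen
  cost := fun S e => if e = B.e₁ S ∨ e = B.e₂ S then 1 else 0

/-- The product solution `sol(X, f) = {(e, x) | e ∈ X, x ∈ f e}`. -/
def PairInst.sol (B : PairInst) (I : Inst) (X : Finset B.E) (f : B.E → Finset I.E) :
    Finset (B.E × I.E) :=
  X.biUnion fun e => {e} ×ˢ f e

/-- The product of a pair-instance (outer) with an instance (inner). -/
def PairInst.prod (B : PairInst) (I : Inst) : Inst where
  E := B.E × I.E
  sols := (B.sols ×ˢ Fintype.piFinset fun _ : B.E => I.sols).image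
    fun p => B.sol I p.1 p.2
  sols_nonempty := by
    obtain ⟨X, hX⟩ := B.sols_nonempty
    obtain ⟨Y, hY⟩ := I.sols_nonempty
    have hf : (fun _ : B.E => Y) ∈ Fintype.piFinset fun _ : B.E => I.sols :=
      Fintype.mem_piFinset.mpr fun _ => hY
    exact Finset.Nonempty.image ⟨(X, fun _ => Y), Finset.mem_product.mpr ⟨hX, hf⟩⟩ _
  Scen := B.Scen × I.Scen × I.Scen
  cost := fun S p =>
    if p.1 = B.e₁ S.1 then I.cost S.2.1 p.2
    else if p.1 = B.e₂ S.1 then I.cost S.2.2 p.2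
    else 0

/-- The iterated construction: `I_0 = B` and `I_{t+1} = B.prod I_t`. -/
def PairInst.iter (B : PairInst) : ℕ → Inst
  | 0 => B.toInst
  | t + 1 => B.prod (B.iter t)

/-! Take the good outer solution `X` with the constant choice `f ≡ X'`. Under the scenario
`(S, S₁, S₂)` only the blocks of `sol(X, f)` over `e₁ S` and `e₂ S` are charged, by `S₁` and `S₂`
respectively; since `X` contains at most one of these two edges, the total is the cost of `X'`
under a single inner scenario. -/

namespace PairInst

variable (B : PairInst) (I : Inst)

theorem sum_sol {M : Type*} [AddCommMonoid M] (X : Finset B.E) (f : B.E → Finset I.E)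
    (g : B.E × I.E → M) : ∑ p ∈ B.sol I X f, g p = ∑ e ∈ X, ∑ x ∈ f e, g (e, x) := by
  rw [sol, Finset.sum_biUnion]
  · simp only [Finset.sum_product, Finset.sum_singleton]
  · intro e _ e' _ hne
    exact Finset.disjoint_product.mpr (Or.inl (Finset.disjoint_singleton.mpr hne))

theorem solCost_prod_sol (X : Finset B.E) (f : B.E → Finset I.E) (S : B.Scen)
    (S₁ S₂ : I.Scen) :
    (B.prod I).solCost (B.sol I X f) (S, S₁, S₂) =
      (if B.e₁ S ∈ X then I.solCost (f (B.e₁ S)) S₁ else 0) +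
        (if B.e₂ S ∈ X then I.solCost (f (B.e₂ S)) S₂ else 0) := by
  have hsplit : ∀ e ∈ X, ∑ x ∈ f e, (B.prod I).cost (S, S₁, S₂) (e, x) =
      (if e = B.e₁ S then I.solCost (f e) S₁ else 0) +
        (if e = B.e₂ S then I.solCost (f e) S₂ else 0) := by
    intro e _
    by_cases h₁ : e = B.e₁ S
    · subst h₁
      simp [prod, Inst.solCost, B.ne S]
    · simp [prod, Inst.solCost, h₁]
  refine (B.sum_sol I X f ((B.prod I).cost (S, S₁, S₂))).trans ?_
  rw [Finset.sum_congr rfl hsplit, Finset.sum_add_distrib,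
    Finset.sum_ite_eq', Finset.sum_ite_eq']

end PairInst

/-- If some `X ∈ Φ` never contains both `e₁ S` and `e₂ S`, and some
`X' ∈ Φ'` has cost at most `a` under every inner scenario, then some product solution
`sol(X, f)` has cost at most `a` under every scenario of the product instance. -/
theorem product_upper_bound (B : PairInst) (I : Inst) (a : ℕ)
    (h1 : ∃ X ∈ B.sols, ∀ S : B.Scen, ¬(B.e₁ S ∈ X ∧ B.e₂ S ∈ X))
    (h2 : ∃ X' ∈ I.sols, ∀ S' : I.Scen, I.solCost X' S' ≤ a) :
    ∃ X ∈ B.sols, ∃ f : B.E → Finset I.E, (∀ e : B.E, f e ∈ I.sols) ∧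
      ∀ S : (B.prod I).Scen, (B.prod I).solCost (B.sol I X f) S ≤ a := by
  obtain ⟨X, hX, hX_pair⟩ := h1
  obtain ⟨X', hX', hX'_cost⟩ := h2
  refine ⟨X, hX, fun _ => X', fun _ => hX', ?_⟩
  rintro ⟨S, S₁, S₂⟩
  rw [B.solCost_prod_sol]
  by_cases h₁ : B.e₁ S ∈ X
  · have h₂ : B.e₂ S ∉ X := fun h₂ => hX_pair S ⟨h₁, h₂⟩
    simpa [h₁, h₂] using hX'_cost S₁
  · split_ifs
    · simpa using hX'_cost S₂
    · simp
end

section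
/- Let an outer pair-instance (E, Φ, Γ, e₁, e₂) and an inner instance (E', Φ', Γ') be given, and let b : ℕ. If for every X ∈ Φ there exists S ∈ Γ with e₁ S ∈ X and e₂ S ∈ X, and for every X' ∈ Φ' there exists a scenario in Γ' under which the cost of X' is at least b, then for every X ∈ Φ and every f : E → Φ' there exists a scenario of the product instance under which the cost of the product solution sol(X, f) is at least 2·b. -/
namespace PairInst

variable (B : PairInst) (I : Inst)

variable {B I}

@[simp]
theorem prod_cost_e₁ (S : B.Scen) (S₁ S₂ : I.Scen) (x : I.E) :
    (B.prod I).cost (S, S₁, S₂) (B.e₁ S, x) = I.cost S₁ x := by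
  simp [prod]

@[simp]
theorem prod_cost_e₂ (S : B.Scen) (S₁ S₂ : I.Scen) (x : I.E) :
    (B.prod I).cost (S, S₁, S₂) (B.e₂ S, x) = I.cost S₂ x := by
  simp [prod, (B.ne S).symm]

theorem prod_cost_of_ne {S : (B.prod I).Scen} {e : B.E} (h₁ : e ≠ B.e₁ S.1) (h₂ : e ≠ B.e₂ S.1)
    (x : I.E) : (B.prod I).cost S (e, x) = 0 := by
  simp [prod, h₁, h₂]

theorem solCost_sol_of_mem {X : Finset B.E} (f : B.E → Finset I.E) {S : B.Scen}
    (h₁ : B.e₁ S ∈ X) (h₂ : B.e₂ S ∈ X) (S₁ S₂ : I.Scen) :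
    (B.prod I).solCost (B.sol I X f) (S, S₁, S₂) =
      I.solCost (f (B.e₁ S)) S₁ + I.solCost (f (B.e₂ S)) S₂ := by
  have hsub : {B.e₁ S, B.e₂ S} ⊆ X := Finset.insert_subset h₁ (Finset.singleton_subset_iff.mpr h₂)
  refine (B.sum_sol I X f _).trans ?_
  rw [← Finset.sum_subset hsub, Finset.sum_pair (B.ne S)]
  · simp [Inst.solCost]
  · intro e _ he
    simp only [Finset.mem_insert, Finset.mem_singleton, not_or] at he
    exact Finset.sum_eq_zero fun x _ => prod_cost_of_ne he.1 he.2 x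

end PairInst

/-- If every `X ∈ Φ` contains both `e₁ S` and `e₂ S` for some `S ∈ Γ`, and
every `X' ∈ Φ'` has cost at least `b` under some inner scenario, then every product
solution `sol(X, f)` has cost at least `2·b` under some scenario of the product. -/
theorem product_lower_bound (B : PairInst) (I : Inst) (b : ℕ)
    (h1 : ∀ X ∈ B.sols, ∃ S : B.Scen, B.e₁ S ∈ X ∧ B.e₂ S ∈ X)
    (h2 : ∀ X' ∈ I.sols, ∃ S' : I.Scen, b ≤ I.solCost X' S') :
    ∀ X ∈ B.sols, ∀ f : B.E → Finset I.E, (∀ e : B.E, f e ∈ I.sols) →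
      ∃ S : (B.prod I).Scen, 2 * b ≤ (B.prod I).solCost (B.sol I X f) S := by
  intro X hX f hf
  obtain ⟨S, h₁, h₂⟩ := h1 X hX
  obtain ⟨S₁, hS₁⟩ := h2 _ (hf (B.e₁ S))
  obtain ⟨S₂, hS₂⟩ := h2 _ (hf (B.e₂ S))
  refine ⟨(S, S₁, S₂), ?_⟩
  rw [PairInst.solCost_sol_of_mem f h₁ h₂]
  omega
end

section
/- In the iterated construction built from a pair-instance B = (E, Φ, Γ, e₁, e₂): if for every S ∈ Γ there exists X ∈ Φ with e₁ S ∉ X and e₂ S ∉ X, then for every t : ℕ and every scenario of the instance I_t there exists a solution of I_t whose cost under that scenario is 0. -/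
/-! A scenario of `B.prod I` only charges edges lying over `e₁ S` or `e₂ S`, so an outer solution
avoiding both has cost 0 whatever inner solutions are plugged in. In particular the claim for
`I_{t+1}` needs nothing about `I_t` beyond the nonemptiness of its solutions. -/

theorem Inst.solCost_eq_zero_iff (I : Inst) {X : Finset I.E} {S : I.Scen} :
    I.solCost X S = 0 ↔ ∀ e ∈ X, I.cost S e = 0 :=
  Finset.sum_eq_zero_iff

namespace PairInst

variable (B : PairInst)

theorem toInst_cost_eq_zero {S : B.Scen} {e : B.E} (h₁ : e ≠ B.e₁ S) (h₂ : e ≠ B.e₂ S) :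
    B.toInst.cost S e = 0 := by
  simp [toInst, h₁, h₂]

theorem prod_cost_eq_zero {I : Inst} {S : B.Scen × I.Scen × I.Scen} {p : B.E × I.E}
    (h₁ : p.1 ≠ B.e₁ S.1) (h₂ : p.1 ≠ B.e₂ S.1) : (B.prod I).cost S p = 0 := by
  simp [prod, h₁, h₂]

theorem fst_mem_of_mem_sol {I : Inst} {X : Finset B.E} {f : B.E → Finset I.E} {p : B.E × I.E}
    (hp : p ∈ B.sol I X f) : p.1 ∈ X := by
  obtain ⟨e, he, hp⟩ := Finset.mem_biUnion.1 hp
  rwa [(Finset.mem_singleton.1 (Finset.mem_product.1 hp).1)]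

theorem sol_mem_prod_sols {I : Inst} {X : Finset B.E} {f : B.E → Finset I.E} (hX : X ∈ B.sols)
    (hf : ∀ e, f e ∈ I.sols) : B.sol I X f ∈ (B.prod I).sols :=
  Finset.mem_image.2 ⟨(X, f), Finset.mem_product.2 ⟨hX, Fintype.mem_piFinset.2 hf⟩, rfl⟩

variable {B}

theorem toInst_exists_zero_cost (h : ∀ S : B.Scen, ∃ X ∈ B.sols, B.e₁ S ∉ X ∧ B.e₂ S ∉ X)
    (S : B.Scen) : ∃ X ∈ B.toInst.sols, B.toInst.solCost X S = 0 := by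
  obtain ⟨X, hX, h₁, h₂⟩ := h S
  refine ⟨X, hX, B.toInst.solCost_eq_zero_iff.2 fun e he => ?_⟩
  exact B.toInst_cost_eq_zero (ne_of_mem_of_not_mem he h₁) (ne_of_mem_of_not_mem he h₂)

theorem prod_exists_zero_cost (h : ∀ S : B.Scen, ∃ X ∈ B.sols, B.e₁ S ∉ X ∧ B.e₂ S ∉ X)
    (I : Inst) (S : (B.prod I).Scen) : ∃ X ∈ (B.prod I).sols, (B.prod I).solCost X S = 0 := by
  obtain ⟨X, hX, h₁, h₂⟩ := h S.1
  obtain ⟨Y, hY⟩ := I.sols_nonempty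
  refine ⟨B.sol I X fun _ => Y, B.sol_mem_prod_sols hX fun _ => hY,
    (B.prod I).solCost_eq_zero_iff.2 fun p hp => ?_⟩
  have hp₁ : p.1 ∈ X := B.fst_mem_of_mem_sol hp
  exact B.prod_cost_eq_zero (ne_of_mem_of_not_mem hp₁ h₁) (ne_of_mem_of_not_mem hp₁ h₂)

end PairInst

/-- If for every `S ∈ Γ` some `X ∈ Φ` avoids both `e₁ S` and `e₂ S`, then
for every `t` and every scenario of `I_t` there is a solution of `I_t` of cost 0. -/
theorem iter_exists_zero_cost (B : PairInst)
    (h : ∀ S : B.Scen, ∃ X ∈ B.sols, B.e₁ S ∉ X ∧ B.e₂ S ∉ X) :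
    ∀ t : ℕ, ∀ S : (B.iter t).Scen,
      ∃ X ∈ (B.iter t).sols, (B.iter t).solCost X S = 0 := by
  rintro (_ | t) S
  · exact PairInst.toInst_exists_zero_cost h S
  · exact PairInst.prod_exists_zero_cost h (B.iter t) S
end

section
/- In the iterated construction built from a pair-instance B = (E, Φ, Γ, e₁, e₂) with |Γ| = K ≥ 1 and |E| = N: for every t : ℕ, the scenario index set of the instance I_t has cardinality K^{2^{t+1} − 1} and the edge type of I_t has cardinality N^{t+1}. (In particular, for any sequence a : ℕ → ℕ with a 0 = K and a (t+1) = K · (a t)², one has a t = K^{2^{t+1} − 1} for all t.) -/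
theorem mul_sq_pow_two_pow_sub_one {M : Type*} [CommMonoid M] (x : M) (t : ℕ) :
    x * (x ^ (2 ^ (t + 1) - 1)) ^ 2 = x ^ (2 ^ (t + 2) - 1) := by
  rw [← pow_mul, ← pow_succ']
  congr 1
  -- `2 * (2 ^ (t + 1) - 1) + 1 = 2 ^ (t + 2) - 1`, with no truncation since `2 ^ (t + 1) ≥ 1`
  have : 1 ≤ 2 ^ (t + 1) := Nat.one_le_two_pow
  rw [pow_succ 2 (t + 1)]
  omega

theorem eq_pow_two_pow_succ_sub_one {M : Type*} [CommMonoid M] (x : M) (a : ℕ → M)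
    (h0 : a 0 = x) (hsucc : ∀ t, a (t + 1) = x * a t ^ 2) (t : ℕ) :
    a t = x ^ (2 ^ (t + 1) - 1) := by
  induction t with
  | zero => simpa using h0
  | succ t ih => rw [hsucc, ih, mul_sq_pow_two_pow_sub_one]

namespace PairInst

variable (B : PairInst)

theorem card_prod_scen (I : Inst) :
    Fintype.card (B.prod I).Scen = Fintype.card B.Scen * Fintype.card I.Scen ^ 2 := by
  change Fintype.card (B.Scen × I.Scen × I.Scen) = _
  rw [Fintype.card_prod, Fintype.card_prod, sq]

theorem card_prod_edge (I : Inst) :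
    Fintype.card (B.prod I).E = Fintype.card B.E * Fintype.card I.E :=
  Fintype.card_prod B.E I.E

theorem card_iter_scen (t : ℕ) :
    Fintype.card (B.iter t).Scen = Fintype.card B.Scen ^ (2 ^ (t + 1) - 1) :=
  eq_pow_two_pow_succ_sub_one _ (fun t => Fintype.card (B.iter t).Scen) rfl
    (fun t => B.card_prod_scen (B.iter t)) t

theorem card_iter_edge (t : ℕ) : Fintype.card (B.iter t).E = Fintype.card B.E ^ (t + 1) := by
  induction t with
  | zero => exact (pow_one _).symm
  | succ t ih => rw [iter, card_prod_edge, ih, ← pow_succ']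

end PairInst

theorem iter_card_general (B : PairInst) (K N : ℕ)
    (hK : Fintype.card B.Scen = K) (hN : Fintype.card B.E = N) :
    (∀ t : ℕ, Fintype.card (B.iter t).Scen = K ^ (2 ^ (t + 1) - 1) ∧
      Fintype.card (B.iter t).E = N ^ (t + 1)) ∧
    (∀ a : ℕ → ℕ, a 0 = K → (∀ t, a (t + 1) = K * (a t) ^ 2) →
      ∀ t, a t = K ^ (2 ^ (t + 1) - 1)) := by
  subst hK hN
  exact ⟨fun t => ⟨B.card_iter_scen t, B.card_iter_edge t⟩, eq_pow_two_pow_succ_sub_one _⟩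

/-- With `|Γ| = K ≥ 1` and `|E| = N`, the instance `I_t` has `K^(2^(t+1)-1)`
scenario indices and `N^(t+1)` edges; in particular any sequence with `a 0 = K` and
`a (t+1) = K * (a t)^2` satisfies `a t = K^(2^(t+1)-1)`. -/
theorem iter_card (B : PairInst) (K N : ℕ)
    (hK : Fintype.card B.Scen = K) (hK1 : 1 ≤ K) (hN : Fintype.card B.E = N) :
    (∀ t : ℕ, Fintype.card (B.iter t).Scen = K ^ (2 ^ (t + 1) - 1) ∧
      Fintype.card (B.iter t).E = N ^ (t + 1)) ∧
    (∀ a : ℕ → ℕ, a 0 = K → (∀ t, a (t + 1) = K * (a t) ^ 2) →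
      ∀ t, a t = K ^ (2 ^ (t + 1) - 1)) :=
  iter_card_general B K N hK hN
end

section
/- For every set C of edges of the graph G_m, the vertices s and t are not connected in the graph obtained from G_m by deleting the edges in C if and only if for every i : Fin m at least one of the three edges of path i belongs to C. -/
/-- Vertex type of the cut graph `G_m`: internal vertices `(i, k)` plus `s = Sum.inr false`
and `t = Sum.inr true`. -/
abbrev Vcut (m : ℕ) := (Fin m × Fin 2) ⊕ Bool

/-- The graph `G_m`, consisting of `m` internally disjoint `s-t` paths, the `i`-th path
having edges `s — (i,0)`, `(i,0) — (i,1)`, `(i,1) — t`. -/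
def Gm (m : ℕ) : SimpleGraph (Vcut m) :=
  SimpleGraph.fromEdgeSet {e : Sym2 (Vcut m) | ∃ i : Fin m,
    e = s(Sum.inr false, Sum.inl (i, 0)) ∨
    e = s(Sum.inl (i, 0), Sum.inl (i, 1)) ∨
    e = s(Sum.inl (i, 1), Sum.inr true)}

/-!
Each path `i` intact after deleting `D` is an `s`–`t` walk. Conversely, if every path loses an
edge, let `S` consist of `s` together with the internal vertices that `s` still reaches along
their own path. `S` contains `s` but not `t`, and no surviving edge leaves `S`: the only
candidate, `(i,1) — t` with `(i,1) ∈ S`, is deleted because the other two edges of path `i` survive.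
-/

namespace SimpleGraph

variable {V : Type*} {G : SimpleGraph V}

theorem Reachable.mem_of_forall_adj_mem {S : Set V} (hS : ∀ ⦃u v⦄, G.Adj u v → u ∈ S → v ∈ S)
    {u v : V} (huv : G.Reachable u v) (hu : u ∈ S) : v ∈ S := by
  obtain ⟨p⟩ := huv
  by_contra hv
  obtain ⟨d, -, hd₁, hd₂⟩ := p.exists_boundary_dart S hu hv
  exact hd₂ (hS d.adj hd₁)

end SimpleGraph

open SimpleGraph

variable {m : ℕ} {D : Set (Sym2 (Vcut m))}

theorem Gm_adj_source (i : Fin m) : (Gm m).Adj (Sum.inr false) (Sum.inl (i, 0)) := by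
  simp [Gm]

theorem Gm_adj_middle (i : Fin m) : (Gm m).Adj (Sum.inl (i, 0)) (Sum.inl (i, 1)) := by
  simp [Gm]

theorem Gm_adj_target (i : Fin m) : (Gm m).Adj (Sum.inl (i, 1)) (Sum.inr true) := by
  simp [Gm]

theorem reachable_of_path_intact {i : Fin m}
    (h₀ : s(Sum.inr false, Sum.inl (i, 0)) ∉ D) (h₁ : s(Sum.inl (i, 0), Sum.inl (i, 1)) ∉ D)
    (h₂ : s(Sum.inl (i, 1), Sum.inr true) ∉ D) :
    ((Gm m).deleteEdges D).Reachable (Sum.inr false) (Sum.inr true) :=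
  ((deleteEdges_adj.2 ⟨Gm_adj_source i, h₀⟩).reachable.trans
    (deleteEdges_adj.2 ⟨Gm_adj_middle i, h₁⟩).reachable).trans
    (deleteEdges_adj.2 ⟨Gm_adj_target i, h₂⟩).reachable

def sourceSide (D : Set (Sym2 (Vcut m))) : Set (Vcut m) :=
  {v | Sum.elim (fun p : Fin m × Fin 2 => s(Sum.inr false, Sum.inl (p.1, 0)) ∉ D ∧
      (p.2 = 1 → s(Sum.inl (p.1, 0), Sum.inl (p.1, 1)) ∉ D)) (fun b => b = false) v}

theorem mem_sourceSide_iff_of_adj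
    (hcut : ∀ i : Fin m,
      s(Sum.inr false, Sum.inl (i, 0)) ∈ D ∨
      s(Sum.inl (i, 0), Sum.inl (i, 1)) ∈ D ∨
      s(Sum.inl (i, 1), Sum.inr true) ∈ D)
    {u v : Vcut m} (huv : ((Gm m).deleteEdges D).Adj u v) :
    u ∈ sourceSide D ↔ v ∈ sourceSide D := by
  rw [deleteEdges_adj, Gm, fromEdgeSet_adj] at huv
  obtain ⟨⟨⟨i, he⟩, -⟩, hD⟩ := huv
  have of_eq {a b : Vcut m} (hab : s(u, v) = s(a, b)) (h : a ∈ sourceSide D ↔ b ∈ sourceSide D) :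
      u ∈ sourceSide D ↔ v ∈ sourceSide D := by
    rcases Sym2.eq_iff.1 hab with ⟨rfl, rfl⟩ | ⟨rfl, rfl⟩
    exacts [h, h.symm]
  rcases he with he | he | he <;> refine of_eq he ?_ <;> rw [he] at hD
  · simp [sourceSide, hD]
  · simp [sourceSide, hD]
  · simpa [sourceSide, hD, or_iff_not_imp_left] using hcut i

/-- Deleting an edge set `D` from `G_m` disconnects `s` from `t` iff for
every `i : Fin m` at least one of the three edges of path `i` belongs to `D`. -/
theorem st_disconnected_iff (m : ℕ) (D : Set (Sym2 (Vcut m))) :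
    (¬ ((Gm m).deleteEdges D).Reachable (Sum.inr false) (Sum.inr true)) ↔
    ∀ i : Fin m,
      s(Sum.inr false, Sum.inl (i, 0)) ∈ D ∨
      s(Sum.inl (i, 0), Sum.inl (i, 1)) ∈ D ∨
      s(Sum.inl (i, 1), Sum.inr true) ∈ D := by
  constructor
  · intro hst i
    by_contra! hi
    exact hst (reachable_of_path_intact hi.1 hi.2.1 hi.2.2)
  · intro hcut hst
    have : Sum.inr true ∈ sourceSide D :=
      hst.mem_of_forall_adj_mem (fun _ _ huv => (mem_sourceSide_iff_of_adj hcut huv).1) rfl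
    exact absurd this (by simp [sourceSide])
end

section
/- For every σ : Fin m → Fin 3 there is a simple path from u_0 to u_m in H_m whose edge set is exactly {u_i — w_{i, σ i} | i : Fin m} ∪ {w_{i, σ i} — u_{i+1} | i : Fin m}; conversely, the edge set of every simple path from u_0 to u_m in H_m has this form for some σ : Fin m → Fin 3. -/
/-- Vertex type of the path graph `H_m`: hub vertices `u_k = Sum.inl k` for
`k : Fin (m+1)` and literal vertices `w_{i,j} = Sum.inr (i, j)`. -/
abbrev Vpath (m : ℕ) := Fin (m + 1) ⊕ (Fin m × Fin 3)

/-- The series-parallel graph `H_m` whose edges are the literal edges `u_i — w_{i,j}`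
and the dummy edges `w_{i,j} — u_{i+1}` for `i : Fin m`, `j : Fin 3`. -/
def Hm (m : ℕ) : SimpleGraph (Vpath m) :=
  SimpleGraph.fromEdgeSet {e : Sym2 (Vpath m) | ∃ i : Fin m, ∃ j : Fin 3,
    e = s(Sum.inl i.castSucc, Sum.inr (i, j)) ∨
    e = s(Sum.inr (i, j), Sum.inl i.succ)}

/-!
For `σ`, the path is the ladder `u_0 — w_{0,σ 0} — u_1 — ⋯ — u_m`, built by appending two edges
at a time. It is simple because, with `u_k` at level `2k` and `w_{i,j}` at level `2i+1`, every
appended vertex lies higher than all earlier ones.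

Conversely, let `p` be a simple path from `u_0` to `u_{k+1}` visiting no hub beyond `u_{k+1}`.
Its last vertex before `u_{k+1}` is some `w_{i,j}`, and the one before that is the other hub
adjacent to `w_{i,j}`. That hub is neither `u_{k+1}` (simplicity) nor `u_{k+2}` (the hub bound),
so `p` ends with `u_k — w_{k,j} — u_{k+1}`. Peeling these two edges off and inducting on `k` shows
that every simple path from `u_0` to `u_m` is a ladder.
-/

open SimpleGraph

theorem SimpleGraph.Walk.exists_eq_concat_of_ne {V : Type*} {G : SimpleGraph V} {u v : V}
    (hne : u ≠ v) (p : G.Walk u v) : ∃ (w : V) (q : G.Walk u w) (h : G.Adj w v), p = q.concat h :=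
  ⟨_, _, _, (p.concat_dropLast (p.adj_penultimate (p.not_nil_of_ne hne))).symm⟩

namespace Hm

variable {m : ℕ}

theorem adj_inr_iff {i : Fin m} {j : Fin 3} {v : Vpath m} :
    (Hm m).Adj (Sum.inr (i, j)) v ↔ v = Sum.inl i.castSucc ∨ v = Sum.inl i.succ := by
  rw [Hm, fromEdgeSet_adj]
  aesop

theorem not_adj_inl_inl (a b : Fin (m + 1)) : ¬ (Hm m).Adj (Sum.inl a) (Sum.inl b) := by
  rw [Hm, fromEdgeSet_adj]
  aesop

theorem adj_castSucc_inr (i : Fin m) (j : Fin 3) :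
    (Hm m).Adj (Sum.inl i.castSucc) (Sum.inr (i, j)) :=
  (adj_inr_iff.2 (.inl rfl)).symm

theorem adj_inr_succ (i : Fin m) (j : Fin 3) : (Hm m).Adj (Sum.inr (i, j)) (Sum.inl i.succ) :=
  adj_inr_iff.2 (.inr rfl)

section extend

variable {u : Vpath m} {i : Fin m}

def extend (q : (Hm m).Walk u (Sum.inl i.castSucc)) (j : Fin 3) :
    (Hm m).Walk u (Sum.inl i.succ) :=
  (q.concat (adj_castSucc_inr i j)).concat (adj_inr_succ i j)

theorem support_extend (q : (Hm m).Walk u (Sum.inl i.castSucc)) (j : Fin 3) :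
    (extend q j).support = q.support ++ [Sum.inr (i, j), Sum.inl i.succ] := by
  simp [extend, Walk.support_concat]

theorem edges_extend (q : (Hm m).Walk u (Sum.inl i.castSucc)) (j : Fin 3) :
    (extend q j).edges =
      q.edges ++ [s(Sum.inl i.castSucc, Sum.inr (i, j)), s(Sum.inr (i, j), Sum.inl i.succ)] := by
  simp [extend, Walk.edges_concat]

theorem isPath_extend_iff {q : (Hm m).Walk u (Sum.inl i.castSucc)} {j : Fin 3} :
    (extend q j).IsPath ↔
      q.IsPath ∧ Sum.inr (i, j) ∉ q.support ∧ Sum.inl i.succ ∉ q.support := by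
  simp [extend, Walk.concat_isPath_iff, Walk.support_concat, and_assoc]

end extend

def ladder (σ : Fin m → Fin 3) :
    (k : ℕ) → (hk : k ≤ m) → (Hm m).Walk (Sum.inl 0) (Sum.inl ⟨k, by omega⟩)
  | 0, _ => .nil
  | k + 1, hk => extend (i := ⟨k, hk⟩) (ladder σ k (by omega)) (σ ⟨k, hk⟩)

theorem ladder_congr {σ τ : Fin m → Fin 3} (k : ℕ) (hk : k ≤ m)
    (hστ : ∀ i : Fin m, i.val < k → σ i = τ i) : ladder σ k hk = ladder τ k hk := by
  induction k with
  | zero => rfl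
  | succ k ih =>
    simp only [ladder, hστ ⟨k, hk⟩ k.lt_succ_self, ih (by omega) fun i hi => hστ i (by omega)]

theorem mem_edges_ladder {σ : Fin m → Fin 3} {k : ℕ} {hk : k ≤ m} {e : Sym2 (Vpath m)} :
    e ∈ (ladder σ k hk).edges ↔ ∃ i : Fin m, i.val < k ∧
      (e = s(Sum.inl i.castSucc, Sum.inr (i, σ i)) ∨ e = s(Sum.inr (i, σ i), Sum.inl i.succ)) := by
  induction k with
  | zero => simp [ladder]
  | succ k ih =>
    simp only [ladder, edges_extend, List.mem_append, ih, List.mem_cons, List.not_mem_nil,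
      or_false]
    constructor
    · rintro (⟨i, hi, he⟩ | he)
      · exact ⟨i, by omega, he⟩
      · exact ⟨⟨k, hk⟩, k.lt_succ_self, he⟩
    · rintro ⟨i, hi, he⟩
      rcases Nat.lt_succ_iff_lt_or_eq.1 hi with hi | rfl
      · exact .inl ⟨i, hi, he⟩
      · exact .inr he

def level : Vpath m → ℕ
  | .inl b => 2 * b.val
  | .inr (i, _) => 2 * i.val + 1

theorem level_le_of_mem_support_ladder {σ : Fin m → Fin 3} {k : ℕ} {hk : k ≤ m} {v : Vpath m}
    (hv : v ∈ (ladder σ k hk).support) : level v ≤ 2 * k := by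
  induction k with
  | zero => simp_all [ladder, level]
  | succ k ih =>
    simp only [ladder, support_extend, List.mem_append, List.mem_cons, List.not_mem_nil,
      or_false] at hv
    rcases hv with hv | rfl | rfl
    · have := ih hv; omega
    · simp [level]
    · simp [level]

theorem isPath_ladder (σ : Fin m → Fin 3) (k : ℕ) (hk : k ≤ m) : (ladder σ k hk).IsPath := by
  induction k with
  | zero => exact .nil
  | succ k ih =>
    refine isPath_extend_iff.2 ⟨ih (by omega), fun hv => ?_, fun hv => ?_⟩ <;>
      simpa [level] using level_le_of_mem_support_ladder hv

theorem exists_eq_extend_of_isPath {i : Fin m} (p : (Hm m).Walk (Sum.inl 0) (Sum.inl i.succ))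
    (hp : p.IsPath) (hhub : ∀ b : Fin (m + 1), Sum.inl b ∈ p.support → b ≤ i.succ) :
    ∃ (r : (Hm m).Walk (Sum.inl 0) (Sum.inl i.castSucc)) (j : Fin 3), p = extend r j := by
  obtain ⟨x, q, hx, rfl⟩ := p.exists_eq_concat_of_ne (by simp [(Fin.succ_ne_zero i).symm])
  rcases x with b | ⟨i', j⟩
  · exact absurd hx (not_adj_inl_inl _ _)
  obtain ⟨y, r, hy, rfl⟩ := q.exists_eq_concat_of_ne (by simp)
  have hend : Sum.inl i.succ ∉ (r.concat hy).support := ((Walk.concat_isPath_iff _).1 hp).2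
  rcases adj_inr_iff.1 hx with hi' | hi'
  · have hi'val : i'.val = i.val + 1 := by simpa [Fin.ext_iff] using hi'.symm
    rcases adj_inr_iff.1 hy.symm with rfl | rfl
    · exact (hend (by simp [hi'])).elim
    · have : i'.val + 1 ≤ i.val + 1 := hhub i'.succ (by simp)
      omega
  · obtain rfl : i' = i := Fin.succ_injective _ (Sum.inl_injective hi').symm
    rcases adj_inr_iff.1 hy.symm with rfl | rfl
    · exact ⟨r, j, rfl⟩
    · exact (hend (by simp)).elim

theorem eq_ladder_of_isPath (k : ℕ) (hk : k ≤ m)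
    (p : (Hm m).Walk (Sum.inl 0) (Sum.inl ⟨k, by omega⟩)) (hp : p.IsPath)
    (hhub : ∀ b : Fin (m + 1), Sum.inl b ∈ p.support → b.val ≤ k) :
    ∃ σ : Fin m → Fin 3, p = ladder σ k hk := by
  induction k with
  | zero => exact ⟨fun _ => 0, (Walk.isPath_iff_nil.1 hp).eq_nil⟩
  | succ k ih =>
    obtain ⟨r, j, rfl⟩ := exists_eq_extend_of_isPath (i := ⟨k, hk⟩) p hp hhub
    obtain ⟨hr, -, hend⟩ := isPath_extend_iff.1 hp
    have hrhub (b : Fin (m + 1)) (hb : Sum.inl b ∈ r.support) : b.val ≤ k := by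
      have hle := hhub b (by simp [support_extend, hb])
      have hne : b.val ≠ k + 1 := fun h => hend (Fin.ext (b := Fin.succ ⟨k, hk⟩) h ▸ hb)
      omega
    obtain ⟨σ, rfl⟩ := ih (by omega) r hr hrhub
    have hagree (i : Fin m) (hi : i.val < k) : σ i = Function.update σ ⟨k, hk⟩ j i :=
      (Function.update_of_ne (Fin.ne_of_val_ne hi.ne) j σ).symm
    refine ⟨Function.update σ ⟨k, hk⟩ j, ?_⟩
    rw [ladder, Function.update_self, ladder_congr k _ hagree]

end Hm

/-- For every `σ : Fin m → Fin 3` there is a simple path from `u_0` to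
`u_m` in `H_m` whose edge set is exactly
`{u_i — w_{i,σ i}} ∪ {w_{i,σ i} — u_{i+1}}`, and conversely the edge set of every simple
path from `u_0` to `u_m` has this form for some `σ`. -/
theorem paths_of_Hm (m : ℕ) :
    (∀ σ : Fin m → Fin 3,
      ∃ p : (Hm m).Walk (Sum.inl 0) (Sum.inl (Fin.last m)), p.IsPath ∧
        {e : Sym2 (Vpath m) | e ∈ p.edges} =
        {e : Sym2 (Vpath m) | ∃ i : Fin m,
          e = s(Sum.inl i.castSucc, Sum.inr (i, σ i)) ∨
          e = s(Sum.inr (i, σ i), Sum.inl i.succ)}) ∧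
    (∀ p : (Hm m).Walk (Sum.inl 0) (Sum.inl (Fin.last m)), p.IsPath →
      ∃ σ : Fin m → Fin 3,
        {e : Sym2 (Vpath m) | e ∈ p.edges} =
        {e : Sym2 (Vpath m) | ∃ i : Fin m,
          e = s(Sum.inl i.castSucc, Sum.inr (i, σ i)) ∨
          e = s(Sum.inr (i, σ i), Sum.inl i.succ)}) := by
  have edgeSet_ladder (σ : Fin m → Fin 3) :
      {e | e ∈ (Hm.ladder σ m le_rfl).edges} = {e | ∃ i : Fin m,
        e = s(Sum.inl i.castSucc, Sum.inr (i, σ i)) ∨ e = s(Sum.inr (i, σ i), Sum.inl i.succ)} := by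
    ext e
    simp [Hm.mem_edges_ladder]
  refine ⟨fun σ => ⟨Hm.ladder σ m le_rfl, Hm.isPath_ladder σ m le_rfl, edgeSet_ladder σ⟩,
    fun p hp => ?_⟩
  obtain ⟨σ, rfl⟩ := Hm.eq_ladder_of_isPath m le_rfl p hp fun b _ => Nat.le_of_lt_succ b.isLt
  exact ⟨σ, edgeSet_ladder σ⟩
end

section
/- For every spanning tree T of H_m and every i : Fin m, there exists j : Fin 3 such that the literal edge u_i — w_{i,j} belongs to the edge set of T. -/
namespace Hm

variable {m : ℕ}

/-- The hubs `u_k` with `k ≤ i` and the literal vertices `w_{k,j}` with `k < i`. -/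
def atOrBefore (i : Fin m) : Set (Vpath m) :=
  {v | Sum.elim (fun k => k.val ≤ i.val) (fun p => p.1.val < i.val) v}

lemma inl_castSucc_mem_atOrBefore (i : Fin m) : Sum.inl i.castSucc ∈ atOrBefore i := by
  simp [atOrBefore]

lemma inl_succ_not_mem_atOrBefore (i : Fin m) : Sum.inl i.succ ∉ atOrBefore i := by
  simp [atOrBefore]

lemma eq_literal_of_adj_of_mem_atOrBefore {i : Fin m} {x y : Vpath m} (hxy : (Hm m).Adj x y)
    (hx : x ∈ atOrBefore i) (hy : y ∉ atOrBefore i) :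
    ∃ j : Fin 3, x = Sum.inl i.castSucc ∧ y = Sum.inr (i, j) := by
  obtain ⟨⟨k, j, hedge | hedge⟩, -⟩ := (SimpleGraph.fromEdgeSet_adj _).mp hxy <;>
    rcases Sym2.eq_iff.mp hedge with ⟨rfl, rfl⟩ | ⟨rfl, rfl⟩ <;>
    simp only [atOrBefore, Set.mem_ofPred_eq, Sum.elim_inl, Sum.elim_inr, Fin.val_castSucc,
      Fin.val_succ] at hx hy
  · obtain rfl : k = i := Fin.ext (by omega)
    exact ⟨j, rfl, rfl⟩
  all_goals omega

end Hm

theorem spanningTree_contains_literal_edge_general (m : ℕ) (T : SimpleGraph (Vpath m))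
    (hle : T ≤ Hm m) (hconn : T.Connected) :
    ∀ i : Fin m, ∃ j : Fin 3,
      s(Sum.inl i.castSucc, Sum.inr (i, j)) ∈ T.edgeSet := by
  intro i
  obtain ⟨walk⟩ := hconn (Sum.inl i.castSucc) (Sum.inl i.succ)
  obtain ⟨d, -, hfst, hsnd⟩ := walk.exists_boundary_dart (Hm.atOrBefore i)
    (Hm.inl_castSucc_mem_atOrBefore i) (Hm.inl_succ_not_mem_atOrBefore i)
  obtain ⟨j, hx, hy⟩ := Hm.eq_literal_of_adj_of_mem_atOrBefore (hle d.adj) hfst hsnd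
  refine ⟨j, ?_⟩
  rw [SimpleGraph.mem_edgeSet, ← hx, ← hy]
  exact d.adj

/-- Every spanning tree of `H_m` contains, for every `i : Fin m`, at least
one literal edge `u_i — w_{i,j}`. -/
theorem spanningTree_contains_literal_edge (m : ℕ) (T : SimpleGraph (Vpath m))
    (hle : T ≤ Hm m) (hconn : T.Connected) (hacyc : T.IsAcyclic) :
    ∀ i : Fin m, ∃ j : Fin 3,
      s(Sum.inl i.castSucc, Sum.inr (i, j)) ∈ T.edgeSet :=
  spanningTree_contains_literal_edge_general m T hle hconn
end

section
/- For every σ : Fin m → Fin 3 there exists a spanning tree T of H_m whose set of literal edges is exactly {u_i — w_{i, σ i} | i : Fin m}; that is, for all i : Fin m and j : Fin 3, the literal edge u_i — w_{i,j} belongs to T if and only if j = σ i. -/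
/-!
Keep the literal edge `u_i — w_{i, σ i}` of each occurrence together with all dummy edges.
Orient every kept edge from `u_i` to `w_{i,j}` and from `w_{i,j}` to `u_{i+1}`: then each vertex
has at most one out-edge and the rank `u_k ↦ 2k`, `w_{i,j} ↦ 2i+1` increases along edges. On a
cycle, the vertex of least rank would need two distinct out-edges, so the graph is acyclic. It
is connected because `u_0 → w_{0,σ 0} → u_1 → ⋯ → u_m` is a path and every `w_{i,j}`
hangs off `u_{i+1}`.
-/

open SimpleGraph

theorem SimpleGraph.isAcyclic_fromRel_of_functional_of_rank_lt {V α : Type*} [LinearOrder α]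
    {r : V → V → Prop} (hr : ∀ a b c, r a b → r a c → b = c) (f : V → α)
    (hf : ∀ a b, r a b → f a < f b) : (fromRel r).IsAcyclic := by
  classical
  intro v c hc
  obtain ⟨u, hu, hmin⟩ := c.support.toFinset.exists_min_image f ⟨v, by simp⟩
  rw [List.mem_toFinset] at hu
  have hd := hc.rotate hu
  set d := c.rotate u hu
  have out_of_adj : ∀ w, (fromRel r).Adj u w → w ∈ d.support → r u w := by
    intro w hadj hw
    refine ((fromRel_adj r u w).1 hadj).2.resolve_right fun hwu => ?_
    exact (hf w u hwu).not_ge (hmin w (by simpa [d] using hw))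
  exact hd.snd_ne_penultimate <| hr _ _ _
    (out_of_adj _ (d.adj_snd hd.not_nil) (d.getVert_mem_support 1))
    (out_of_adj _ (d.adj_penultimate hd.not_nil).symm (d.getVert_mem_support _))

namespace Hm

variable {m : ℕ} (σ : Fin m → Fin 3)

def choiceStep : Vpath m → Vpath m → Prop
  | .inl k, .inr (i, j) => k = i.castSucc ∧ j = σ i
  | .inr (i, _), .inl k => k = i.succ
  | _, _ => False

def choiceTree : SimpleGraph (Vpath m) := fromRel (choiceStep σ)

def rank : Vpath m → ℕ := Sum.elim (fun k => 2 * k) (fun p => 2 * p.1 + 1)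

theorem rank_lt_of_choiceStep : ∀ a b, choiceStep σ a b → rank a < rank b
  | .inl _, .inr _, ⟨rfl, _⟩ => by simp [rank]
  | .inr _, .inl _, rfl => by simp [rank]; omega

theorem eq_of_choiceStep_of_choiceStep :
    ∀ a b c, choiceStep σ a b → choiceStep σ a c → b = c
  | .inl _, .inr (_, _), .inr (_, _), ⟨h, rfl⟩, ⟨h', rfl⟩ => by
    obtain rfl := Fin.castSucc_inj.mp (h.symm.trans h')
    rfl
  | .inr _, .inl _, .inl _, rfl, rfl => rfl

theorem choiceTree_isAcyclic : (choiceTree σ).IsAcyclic :=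
  isAcyclic_fromRel_of_functional_of_rank_lt (eq_of_choiceStep_of_choiceStep σ) rank
    (rank_lt_of_choiceStep σ)

theorem choiceTree_adj_of_choiceStep {a b : Vpath m} (h : choiceStep σ a b) :
    (choiceTree σ).Adj a b :=
  (fromRel_adj _ a b).2 ⟨fun hab => (rank_lt_of_choiceStep σ a b h).ne (congrArg rank hab),
    Or.inl h⟩

theorem choiceTree_adj_literal (i : Fin m) :
    (choiceTree σ).Adj (.inl i.castSucc) (.inr (i, σ i)) :=
  choiceTree_adj_of_choiceStep σ ⟨rfl, rfl⟩

theorem choiceTree_adj_dummy (i : Fin m) (j : Fin 3) :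
    (choiceTree σ).Adj (.inr (i, j)) (.inl i.succ) :=
  choiceTree_adj_of_choiceStep σ (a := .inr (i, j)) rfl

theorem choiceTree_connected : (choiceTree σ).Connected := by
  have hub : ∀ k, (choiceTree σ).Reachable (.inl 0) (.inl k) :=
    Fin.induction .rfl fun i ih => ih.trans <|
      (choiceTree_adj_literal σ i).reachable.trans (choiceTree_adj_dummy σ i (σ i)).reachable
  refine (connected_iff_exists_forall_reachable _).2 ⟨.inl 0, ?_⟩
  rintro (k | ⟨i, j⟩)
  · exact hub k
  · exact (hub i.succ).trans (choiceTree_adj_dummy σ i j).symm.reachable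

theorem adj_of_choiceStep : ∀ {a b : Vpath m}, choiceStep σ a b → (Hm m).Adj a b
  | .inl _, .inr (i, j), ⟨rfl, _⟩ =>
    (fromEdgeSet_adj _).2 ⟨⟨i, j, .inl rfl⟩, Sum.inl_ne_inr⟩
  | .inr (i, j), .inl _, rfl =>
    (fromEdgeSet_adj _).2 ⟨⟨i, j, .inr rfl⟩, Sum.inr_ne_inl⟩

theorem choiceTree_le : choiceTree σ ≤ Hm m := by
  intro a b hab
  rcases ((fromRel_adj _ a b).1 hab).2 with h | h
  · exact adj_of_choiceStep σ h
  · exact (adj_of_choiceStep σ h).symm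

theorem literal_mem_edgeSet_choiceTree_iff (i : Fin m) (j : Fin 3) :
    s(Sum.inl i.castSucc, Sum.inr (i, j)) ∈ (choiceTree σ).edgeSet ↔ j = σ i := by
  simp [choiceTree, choiceStep, (Fin.castSucc_lt_succ (i := i)).ne]

end Hm

/-- For every `σ : Fin m → Fin 3` there is a spanning tree of `H_m` whose
literal edges are exactly the edges `u_i — w_{i, σ i}`. -/
theorem exists_spanningTree_with_literal_edges (m : ℕ) (σ : Fin m → Fin 3) :
    ∃ T : SimpleGraph (Vpath m), T ≤ Hm m ∧ T.Connected ∧ T.IsAcyclic ∧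
      ∀ (i : Fin m) (j : Fin 3),
        (s(Sum.inl i.castSucc, Sum.inr (i, j)) ∈ T.edgeSet ↔ j = σ i) :=
  ⟨Hm.choiceTree σ, Hm.choiceTree_le σ, Hm.choiceTree_connected σ, Hm.choiceTree_isAcyclic σ,
    Hm.literal_mem_edgeSet_choiceTree_iff σ⟩
end

section
/- The 3-CNF formula C is satisfiable if and only if there exists a set D of edges of G_m such that s and t are not connected in the graph obtained from G_m by deleting the edges in D, and for every pair of contradictory occurrences o and o', at most one of the two edges corresponding to o and o' belongs to D. (Equivalently: the minmax s-t cut value of the constructed instance is at most 1 if C is satisfiable and at least 2 otherwise.) -/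
/-- The edge of `G_m` corresponding to the occurrence `(i, j)`:
`j = 0`: `s — (i,0)`; `j = 1`: `(i,0) — (i,1)`; `j = 2`: `(i,1) — t`. -/
def occEdge {m : ℕ} (o : Fin m × Fin 3) : Sym2 (Vcut m) :=
  if o.2 = 0 then s(Sum.inr false, Sum.inl (o.1, 0))
  else if o.2 = 1 then s(Sum.inl (o.1, 0), Sum.inl (o.1, 1))
  else s(Sum.inl (o.1, 1), Sum.inr true)

/-!
Deleting `D` separates `s` from `t` iff `D` meets each of the `m` paths, i.e. contains an edge
`occEdge (i, j i)` for some choice `j` of one literal occurrence per clause. The condition on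
contradictory occurrences then says exactly that the chosen literals can be made true
simultaneously, which is satisfiability.
-/

theorem SimpleGraph.Reachable.apply_eq_of_adj {V β : Type*} {G : SimpleGraph V} {f : V → β}
    (hf : ∀ ⦃u v⦄, G.Adj u v → f u = f v) {u v : V} (h : G.Reachable u v) : f u = f v := by
  obtain ⟨w⟩ := h
  induction w with
  | nil => rfl
  | cons hadj _ ih => exact (hf hadj).trans ih

theorem exists_assignment_iff_exists_consistent_choice {ι κ α : Type*} (C : ι → κ → α × Bool) :
    (∃ a : α → Bool, ∀ i, ∃ j, a (C i j).1 = (C i j).2) ↔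
      ∃ j : ι → κ, ∀ i i', (C i (j i)).1 = (C i' (j i')).1 → (C i (j i)).2 = (C i' (j i')).2 := by
  classical
  constructor
  · rintro ⟨a, ha⟩
    choose j hj using ha
    exact ⟨j, fun i i' hvar => (hj i).symm.trans (hvar ▸ hj i')⟩
  · rintro ⟨j, hj⟩
    refine ⟨fun x => decide (∃ i, C i (j i) = (x, true)), fun i => ⟨j i, ?_⟩⟩
    cases hsgn : (C i (j i)).2
    · simp only [decide_eq_false_iff_not, not_exists]
      intro i' hi'
      simpa [hsgn, hi'] using hj i i' (by rw [hi'])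
    · exact decide_eq_true ⟨i, Prod.ext rfl hsgn⟩

section CutGraph

variable {m : ℕ}

theorem occEdge_injective : Function.Injective (occEdge : Fin m × Fin 3 → Sym2 (Vcut m)) := by
  rintro ⟨i, j⟩ ⟨i', j'⟩ h
  fin_cases j <;> fin_cases j' <;> simp_all [occEdge, Prod.ext_iff]

theorem edgeSet_Gm : (Gm m).edgeSet = Set.range occEdge := by
  ext e
  simp only [Gm, SimpleGraph.edgeSet_fromEdgeSet, Set.mem_sdiff, Set.mem_ofPred_eq, Set.mem_range]
  constructor
  · rintro ⟨⟨i, rfl | rfl | rfl⟩, -⟩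
    exacts [⟨(i, 0), rfl⟩, ⟨(i, 1), rfl⟩, ⟨(i, 2), rfl⟩]
  · rintro ⟨⟨i, k⟩, rfl⟩
    fin_cases k <;> simp [occEdge]

def cutSide (j : Fin m → Fin 3) : Vcut m → Bool
  | .inr b => b
  | .inl (i, k) => decide ((j i : ℕ) ≤ k)

theorem cutSide_eq_of_occEdge_eq (j : Fin m → Fin 3) {i : Fin m} {k : Fin 3} (hk : k ≠ j i)
    {u v : Vcut m} (h : occEdge (i, k) = s(u, v)) : cutSide j u = cutSide j v := by
  obtain rfl | rfl | rfl : k = 0 ∨ k = 1 ∨ k = 2 := by omega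
  all_goals
    simp only [occEdge, Fin.isValue, Fin.reduceEq, reduceIte, Sym2.eq_iff] at h
    rcases h with ⟨rfl, rfl⟩ | ⟨rfl, rfl⟩ <;> grind [cutSide]

theorem adj_deleteEdges_Gm_iff (D : Set (Sym2 (Vcut m))) {u v : Vcut m} :
    ((Gm m).deleteEdges D).Adj u v ↔ ∃ o, occEdge o = s(u, v) ∧ occEdge o ∉ D := by
  rw [← SimpleGraph.mem_edgeSet, SimpleGraph.edgeSet_deleteEdges, edgeSet_Gm]
  constructor
  · rintro ⟨⟨o, ho⟩, hD⟩
    exact ⟨o, ho, ho ▸ hD⟩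
  · rintro ⟨o, ho, hD⟩
    exact ⟨⟨o, ho⟩, ho ▸ hD⟩

theorem reachable_deleteEdges_Gm_iff (D : Set (Sym2 (Vcut m))) :
    ((Gm m).deleteEdges D).Reachable (Sum.inr false) (Sum.inr true) ↔
      ∃ i, ∀ j, occEdge (i, j) ∉ D := by
  constructor
  · contrapose!
    intro hcut hreach
    choose j hj using hcut
    refine Bool.false_ne_true (hreach.apply_eq_of_adj (f := cutSide j) fun u v huv => ?_)
    obtain ⟨⟨i, k⟩, ho, hD⟩ := (adj_deleteEdges_Gm_iff D).1 huv
    exact cutSide_eq_of_occEdge_eq j (by rintro rfl; exact hD (hj i)) ho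
  · rintro ⟨i, hi⟩
    have hadj : ∀ k {u v}, occEdge (i, k) = s(u, v) → ((Gm m).deleteEdges D).Adj u v :=
      fun k _ _ h => (adj_deleteEdges_Gm_iff D).2 ⟨_, h, hi k⟩
    exact ((hadj 0 rfl).reachable.trans (hadj 1 rfl).reachable).trans (hadj 2 rfl).reachable

end CutGraph

/-- The 3-CNF formula `C` is satisfiable iff there is a set `D` of edges of
`G_m` whose deletion disconnects `s` from `t` and such that for every pair of
contradictory occurrences, at most one of the two corresponding edges belongs to `D`. -/
theorem threeSat_iff_cut (n m : ℕ) (C : Fin m → Fin 3 → Fin n × Bool) :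
    (∃ a : Fin n → Bool, ∀ i : Fin m, ∃ j : Fin 3, a (C i j).1 = (C i j).2) ↔
    (∃ D : Set (Sym2 (Vcut m)),
      (¬ ((Gm m).deleteEdges D).Reachable (Sum.inr false) (Sum.inr true)) ∧
      ∀ o o' : Fin m × Fin 3, o ≠ o' →
        (C o.1 o.2).1 = (C o'.1 o'.2).1 → (C o.1 o.2).2 ≠ (C o'.1 o'.2).2 →
        ¬(occEdge o ∈ D ∧ occEdge o' ∈ D)) := by
  rw [exists_assignment_iff_exists_consistent_choice]
  simp only [reachable_deleteEdges_Gm_iff, not_exists, not_forall, not_not]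
  constructor
  · rintro ⟨j, hj⟩
    refine ⟨Set.range fun i => occEdge (i, j i), fun i => ⟨j i, i, rfl⟩, ?_⟩
    rintro o o' - hvar hsgn ⟨⟨i, hi⟩, ⟨i', hi'⟩⟩
    obtain rfl := occEdge_injective hi
    obtain rfl := occEdge_injective hi'
    exact hsgn (hj i i' hvar)
  · rintro ⟨D, hcut, hcon⟩
    choose j hj using hcut
    refine ⟨j, fun i i' hvar => ?_⟩
    by_contra hsgn
    have hne : (i, j i) ≠ (i', j i') := by
      rintro ⟨⟩
      exact hsgn rfl
    exact hcon _ _ hne hvar hsgn ⟨hj i, hj i'⟩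
end

section
/- Assume there exists at least one contradictory pair of occurrences of the 3-CNF formula C. Then for every contradictory pair p of occurrences, the minimum over all selections σ of cost(σ, p) equals 0, and consequently the minimum over all selections σ of the maximum over all contradictory pairs p of the regret cost(σ, p) − min_{σ'} cost(σ', p) equals the minimum over all selections σ of the maximum over all contradictory pairs p of cost(σ, p); i.e., in the constructed instance the optimal minmax regret value coincides with the optimal minmax value. -/
/-!
Every scenario has a selection of cost zero: the constant selection picking, in every clause,
a position different from the two positions of the pair. Hence the minimum cost of each
scenario is 0, the regret of a selection is its plain cost, and the two minmax values agree.
-/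

/-- The cost of a selection `σ` under the scenario given by the (contradictory) pair of
occurrences `p = (o, o')`: one unit for each of the two occurrences that belongs to the
occurrence set `X_σ = {(i, σ i) | i}`. -/
def pairCost {m : ℕ} (σ : Fin m → Fin 3) (p : (Fin m × Fin 3) × (Fin m × Fin 3)) : ℕ :=
  (if σ p.1.1 = p.1.2 then 1 else 0) + (if σ p.2.1 = p.2.2 then 1 else 0)

lemma exists_pairCost_eq_zero {m : ℕ} (p : (Fin m × Fin 3) × (Fin m × Fin 3)) :
    ∃ σ : Fin m → Fin 3, pairCost σ p = 0 := by
  obtain ⟨x, hx₁, hx₂⟩ : ∃ x : Fin 3, x ≠ p.1.2 ∧ x ≠ p.2.2 := by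
    have : ∀ a b : Fin 3, ∃ x, x ≠ a ∧ x ≠ b := by decide
    exact this _ _
  exact ⟨fun _ => x, by simp [pairCost, hx₁, hx₂]⟩

lemma inf'_pairCost_eq_zero {m : ℕ} (p : (Fin m × Fin 3) × (Fin m × Fin 3)) :
    Finset.univ.inf' Finset.univ_nonempty (fun σ : Fin m → Fin 3 => pairCost σ p) = 0 := by
  obtain ⟨σ, hσ⟩ := exists_pairCost_eq_zero p
  exact Nat.eq_zero_of_le_zero (hσ ▸ Finset.inf'_le _ (Finset.mem_univ σ))

lemma Finset.inf'_sup'_sub_eq_inf'_sup'_of_inf'_eq_zero {α β : Type*}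
    {s : Finset α} {t : Finset β} (hs : s.Nonempty) (ht : t.Nonempty) (f : α → β → ℕ)
    (h : ∀ b ∈ t, s.inf' hs (f · b) = 0) :
    s.inf' hs (fun a => t.sup' ht fun b => f a b - s.inf' hs (f · b)) =
      s.inf' hs (fun a => t.sup' ht fun b => f a b) :=
  Finset.inf'_congr hs rfl fun _ _ =>
    Finset.sup'_congr ht rfl fun b hb => by rw [h b hb, Nat.sub_zero]

/-- If the 3-CNF formula `C` has at least one contradictory pair of
occurrences, then for every contradictory pair `p` the minimum over selections of
`cost(σ, p)` is 0, and hence the optimal minmax regret value equals the optimal minmax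
value of the constructed instance. -/
theorem minmaxRegret_eq_minmax_selection (n m : ℕ) (C : Fin m → Fin 3 → Fin n × Bool)
    (hP : (Finset.univ.filter
        (fun p : (Fin m × Fin 3) × (Fin m × Fin 3) =>
          p.1 ≠ p.2 ∧ (C p.1.1 p.1.2).1 = (C p.2.1 p.2.2).1 ∧
            (C p.1.1 p.1.2).2 ≠ (C p.2.1 p.2.2).2)).Nonempty) :
    (∀ p ∈ Finset.univ.filter
        (fun p : (Fin m × Fin 3) × (Fin m × Fin 3) =>
          p.1 ≠ p.2 ∧ (C p.1.1 p.1.2).1 = (C p.2.1 p.2.2).1 ∧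
            (C p.1.1 p.1.2).2 ≠ (C p.2.1 p.2.2).2),
      (Finset.univ.inf' Finset.univ_nonempty
        (fun σ : Fin m → Fin 3 => pairCost σ p)) = 0) ∧
    (Finset.univ.inf' Finset.univ_nonempty (fun σ : Fin m → Fin 3 =>
        (Finset.univ.filter
          (fun p : (Fin m × Fin 3) × (Fin m × Fin 3) =>
            p.1 ≠ p.2 ∧ (C p.1.1 p.1.2).1 = (C p.2.1 p.2.2).1 ∧
              (C p.1.1 p.1.2).2 ≠ (C p.2.1 p.2.2).2)).sup' hP
          (fun p => pairCost σ p -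
            Finset.univ.inf' Finset.univ_nonempty
              (fun σ' : Fin m → Fin 3 => pairCost σ' p)))) =
      Finset.univ.inf' Finset.univ_nonempty (fun σ : Fin m → Fin 3 =>
        (Finset.univ.filter
          (fun p : (Fin m × Fin 3) × (Fin m × Fin 3) =>
            p.1 ≠ p.2 ∧ (C p.1.1 p.1.2).1 = (C p.2.1 p.2.2).1 ∧
              (C p.1.1 p.1.2).2 ≠ (C p.2.1 p.2.2).2)).sup' hP
          (fun p => pairCost σ p)) :=
  ⟨fun p _ => inf'_pairCost_eq_zero p,
    Finset.inf'_sup'_sub_eq_inf'_sup'_of_inf'_eq_zero _ hP pairCost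
      fun p _ => inf'_pairCost_eq_zero p⟩
end
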